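/- arXiv:1505.07736 — 2 statements merged into one kernel-verified Lean document; each statement's English description precedes it below -/
import Mathlib

section
/- For an element x of a nominal set X, there are at most |supp(x)|! many elements in the orbit of x whose least support equals supp(x). -/
open Pointwise

/-- The subgroup of finite permutations of the atoms `ℕ`. -/
def FinPerm : Subgroup (Equiv.Perm ℕ) where
  carrier := {π | {v | π v ≠ v}.Finite}
  one_mem' := by simp
  mul_mem' := by
    intro a b ha hb
    refine (ha.union hb).subset ?_
    intro v hv
    simp only [Set.mem_setOf_eq, Equiv.Perm.mul_apply] at hv
    by_contra h
    simp only [Set.mem_union, Set.mem_setOf_eq, not_or, not_not] at h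
    rw [h.2] at hv
    exact hv h.1
  inv_mem' := by
    intro a ha
    refine ha.subset ?_
    intro v hv
    simp only [Set.mem_setOf_eq] at hv ⊢
    intro h
    exact hv (by conv_lhs => rw [← h, ← Equiv.Perm.mul_apply, inv_mul_cancel, Equiv.Perm.one_apply])


/-- Equivariant maps between `FinPerm`-sets. -/
def Equivariant {X Y : Type*} [MulAction FinPerm X] [MulAction FinPerm Y] (f : X → Y) : Prop :=
  ∀ (π : FinPerm) (x : X), f (π • x) = π • f x

/-- A finite set of atoms supports an element. -/
def Supports {X : Type*} [MulAction FinPerm X] (S : Finset ℕ) (x : X) : Prop :=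
  ∀ π : FinPerm, (∀ v ∈ S, π • v = v) → π • x = x

/-- A nominal set: a `FinPerm`-set with a least finite support function. -/
class NominalSet (X : Type*) [MulAction FinPerm X] where
  supp : X → Finset ℕ
  supports_supp : ∀ x : X, Supports (supp x) x
  supp_least : ∀ (x : X) (S : Finset ℕ), Supports S x → supp x ⊆ S

open NominalSet

/-!
If `y = π • x`, then `y` depends only on the restriction of `π` to `supp x`, since `supp x`
supports `x`. Equivariance of least supports gives `supp y = π • supp x`, so `supp y = supp x`
forces `π` to permute `supp x`; hence every such `y` is `e • x` for one of the `|supp x|!`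
permutations `e` of `supp x`.
-/

def FinPerm.ofSubtype (S : Finset ℕ) (e : Equiv.Perm S) : FinPerm :=
  ⟨Equiv.Perm.ofSubtype e, S.finite_toSet.subset fun v hv => by
    by_contra hvS
    exact hv (Equiv.Perm.ofSubtype_apply_of_not_mem e hvS)⟩

namespace Supports

variable {X : Type*} [MulAction FinPerm X] {S : Finset ℕ} {x : X}

theorem smul_eq_smul (hS : Supports S x) {π σ : FinPerm} (h : ∀ v ∈ S, π • v = σ • v) :
    π • x = σ • x := by
  have hfix : (σ⁻¹ * π) • x = x := hS _ fun v hv => by rw [mul_smul, h v hv, inv_smul_smul]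
  rwa [mul_smul, inv_smul_eq_iff] at hfix

theorem smul (hS : Supports S x) (π : FinPerm) : Supports (S.image (π • ·)) (π • x) := by
  intro σ hσ
  rw [← mul_smul, hS.smul_eq_smul (σ := π) fun v hv => by
    rw [mul_smul, hσ _ (Finset.mem_image_of_mem _ hv)]]

end Supports

section

variable {X : Type*} [MulAction FinPerm X] [NominalSet X]

theorem supp_smul (π : FinPerm) (x : X) : supp (π • x) = (supp x).image (π • ·) := by
  refine (supp_least _ _ ((supports_supp x).smul π)).antisymm ?_
  have h := supp_least _ _ ((supports_supp (π • x)).smul π⁻¹)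
  rw [inv_smul_smul] at h
  simpa [Finset.image_image, Function.comp_def] using Finset.image_subset_image (f := (π • ·)) h

theorem exists_ofSubtype_smul_eq (π : FinPerm) (x : X) (h : supp (π • x) = supp x) :
    ∃ e : Equiv.Perm (supp x), FinPerm.ofSubtype (supp x) e • x = π • x := by
  rw [supp_smul] at h
  have hmaps : ∀ v, π • v ∈ supp x ↔ v ∈ supp x := fun v => by
    simpa only [h] using (MulAction.injective π).mem_finset_image (s := supp x) (a := v)
  refine ⟨(π : Equiv.Perm ℕ).subtypePerm hmaps, (supports_supp x).smul_eq_smul fun v hv => ?_⟩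
  exact Equiv.Perm.ofSubtype_subtypePerm_of_mem hmaps hv

end

/-- In the orbit of `x` there are at most `|supp x|!` elements whose least support
equals `supp x`. -/
theorem encard_same_supp_in_orbit_le_factorial {X : Type*} [MulAction FinPerm X] [NominalSet X]
    (x : X) :
    {y ∈ MulAction.orbit FinPerm x | supp y = supp x}.encard
      ≤ ((supp x).card.factorial : ℕ∞) := by
  have hsub : {y ∈ MulAction.orbit FinPerm x | supp y = supp x} ⊆
      Set.range fun e : Equiv.Perm (supp x) => FinPerm.ofSubtype (supp x) e • x := by
    rintro _ ⟨⟨π, rfl⟩, h⟩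
    exact exists_ofSubtype_smul_eq π x h
  calc _ ≤ _ := Set.encard_le_encard hsub
    _ ≤ (Set.univ : Set (Equiv.Perm (supp x))).encard := by
        rw [← Set.image_univ]; exact Set.encard_image_le _ _
    _ = _ := by simp [Set.encard_univ, Fintype.card_perm]
end

section
/- If π ∈ Perm(𝕍) satisfies π·supp(x) = supp(x) (setwise) for an element x of a nominal set, then π factors as π = f ∘ g where f fixes 𝕍 ∖ supp(x) pointwise, g fixes supp(x) pointwise, and g·x = x; consequently π·x = f·x. -/
open Pointwise

open NominalSet

/-! Extend `π` restricted to `supp x` by the identity to get `f`. Then `g := f⁻¹ * π` fixes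
`supp x` pointwise, so `g • x = x` because `supp x` supports `x`. -/

namespace FinPerm

theorem mem_of_forall_notMem_apply_eq {σ : Equiv.Perm ℕ} (S : Finset ℕ)
    (hσ : ∀ v ∉ S, σ v = v) : σ ∈ FinPerm :=
  S.finite_toSet.subset fun v hv => by_contra fun hvS => hv (hσ v hvS)

theorem apply_mem_iff_of_smul_finset_eq {π : FinPerm} {S : Finset ℕ} (h : π • S = S) (v : ℕ) :
    (π : Equiv.Perm ℕ) v ∈ S ↔ v ∈ S := by
  have := Finset.smul_mem_smul_finset_iff π (b := v) (s := S)
  rwa [h] at this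

def restrict (π : FinPerm) (S : Finset ℕ) (h : π • S = S) : FinPerm :=
  ⟨Equiv.Perm.ofSubtype ((π : Equiv.Perm ℕ).subtypePerm (apply_mem_iff_of_smul_finset_eq h)),
    mem_of_forall_notMem_apply_eq S fun _ hv => Equiv.Perm.ofSubtype_apply_of_not_mem _ hv⟩

variable {π : FinPerm} {S : Finset ℕ} {v : ℕ}

theorem restrict_smul_of_mem (h : π • S = S) (hv : v ∈ S) : restrict π S h • v = π • v :=
  Equiv.Perm.ofSubtype_subtypePerm_of_mem _ hv

theorem restrict_smul_of_notMem (h : π • S = S) (hv : v ∉ S) : restrict π S h • v = v :=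
  Equiv.Perm.ofSubtype_apply_of_not_mem _ hv

end FinPerm

theorem Supports.smul_eq_smul_s3 {X : Type*} [MulAction FinPerm X] {S : Finset ℕ} {x : X}
    (hS : Supports S x) {π σ : FinPerm} (hπσ : ∀ v ∈ S, π • v = σ • v) : π • x = σ • x := by
  rw [← inv_smul_eq_iff, smul_smul]
  exact hS _ fun v hv => by rw [mul_smul, hπσ v hv, inv_smul_smul]

/-- If `π` fixes `supp x` setwise, then `π = f * g` where `f` fixes the complement of
`supp x` pointwise, `g` fixes `supp x` pointwise and `g • x = x`; consequently `π • x = f • x`. -/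
theorem factor_of_setwise_fix {X : Type*} [MulAction FinPerm X] [NominalSet X]
    (x : X) (π : FinPerm) (h : π • supp x = supp x) :
    ∃ f g : FinPerm,
      (∀ v : ℕ, v ∉ supp x → f • v = v) ∧
      (∀ v ∈ supp x, g • v = v) ∧
      g • x = x ∧ π = f * g ∧ π • x = f • x := by
  set f := FinPerm.restrict π (supp x) h
  have hπf : ∀ v ∈ supp x, π • v = f • v := fun v hv => (FinPerm.restrict_smul_of_mem h hv).symm
  refine ⟨f, f⁻¹ * π, fun v hv => FinPerm.restrict_smul_of_notMem h hv, ?_, ?_, by group,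
    (supports_supp x).smul_eq_smul_s3 hπf⟩
  · intro v hv
    rw [mul_smul, inv_smul_eq_iff, hπf v hv]
  · rw [mul_smul, inv_smul_eq_iff, (supports_supp x).smul_eq_smul_s3 hπf]
end
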